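/- Assume the reduction-by-stages setting. Then 𝔪₀ ⊆ ker(ad f₁), i.e. ⁅z, f₁⁆ = 0 for every z ∈ 𝔪₀. -/

import Mathlib

open LieAlgebra Module

noncomputable section

variable {L : Type*} [LieRing L] [LieAlgebra ℂ L]

/-- The `j`-eigenspace of `ad q` on the Lie algebra. -/
def gSp (q : L) (j : ℤ) : Submodule ℂ L where
  carrier := {x | ⁅q, x⁆ = (j : ℂ) • x}
  add_mem' {a b} ha hb := by
    simp only [Set.mem_setOf_eq] at *
    rw [lie_add, ha, hb, smul_add]
  zero_mem' := by simp
  smul_mem' c x hx := by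
    simp only [Set.mem_setOf_eq] at *
    rw [lie_smul, hx, smul_comm]

/-- The grading by `q` (whose adjoint action is diagonalizable with integer eigenvalues)
is good for `f`. -/
structure IsGoodGrading (q f : L) : Prop where
  decomp : (⨆ j : ℤ, gSp q j) = ⊤
  f_mem : f ∈ gSp q (-2)
  inj : ∀ j : ℤ, 1 ≤ j → ∀ x ∈ gSp q j, ⁅f, x⁆ = 0 → x = 0
  surj : ∀ j : ℤ, j ≤ 1 → ∀ y ∈ gSp q (j - 2), ∃ x ∈ gSp q j, ⁅f, x⁆ = y

/-- `m` is a good algebra for `(f, q)`: `m = l ⊕ ⨁_{j ≥ 2} 𝔤_j(q)` for a Lagrangian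
subspace `l` of `𝔤₁(q)` with respect to the symplectic form `(x, y) ↦ B f ⁅x, y⁆`. -/
def IsGoodAlgebra (B : LinearMap.BilinForm ℂ L) (q f : L) (m : Submodule ℂ L) : Prop :=
  ∃ l : Submodule ℂ L, l ≤ gSp q 1 ∧
    (∀ x ∈ l, ∀ y ∈ l, B f ⁅x, y⁆ = 0) ∧
    (∀ x ∈ gSp q 1, (∀ y ∈ l, B f ⁅x, y⁆ = 0) → x ∈ l) ∧
    m = l ⊔ ⨆ j : ℤ, ⨆ _ : 2 ≤ j, gSp q j

/-!
For `z ∈ 𝔪₀ ⊆ 𝔤₀(q₁)` the element `⁅z, f₁⁆` has `q₁`-degree `-2`, so by nondegeneracy and the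
grading it vanishes once it is `B`-orthogonal to `𝔤₂(q₁)`. For `y ∈ 𝔤₂(q₁) ⊆ 𝔪₁ ⊆ 𝔪₂`, invariance
gives `B ⁅z, f₁⁆ y = -χ₁ ⁅z, y⁆`. Now `χ₂` vanishes on `⁅𝔪₂, 𝔪₂⁆` (brackets in a good algebra have
degree `≥ 3`, except those inside the Lagrangian `𝔩`), and `χ₂ - χ₁ = B f₀` kills `⁅z, y⁆ ∈ 𝔤₂(q₁)`
because `f₀` has degree `0`.
-/

def gSpGe (q : L) (k : ℤ) : Submodule ℂ L :=
  ⨆ j : ℤ, ⨆ _ : k ≤ j, gSp q j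

lemma mem_gSp {q x : L} {j : ℤ} : x ∈ gSp q j ↔ ⁅q, x⁆ = (j : ℂ) • x := Iff.rfl

lemma lie_mem_gSp {q x y : L} {a b : ℤ} (hx : x ∈ gSp q a) (hy : y ∈ gSp q b) :
    ⁅x, y⁆ ∈ gSp q (a + b) := by
  rw [mem_gSp] at hx hy ⊢
  rw [leibniz_lie, hx, hy, smul_lie, lie_smul]
  push_cast
  module

lemma gSp_le_gSpGe {q : L} {j k : ℤ} (h : k ≤ j) : gSp q j ≤ gSpGe q k :=
  le_iSup₂_of_le j h le_rfl

lemma gSpGe_anti {q : L} {k k' : ℤ} (h : k ≤ k') : gSpGe q k' ≤ gSpGe q k :=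
  iSup₂_le fun _ hj => gSp_le_gSpGe (h.trans hj)

@[elab_as_elim]
lemma gSpGe_induction {q : L} {k : ℤ} {motive : L → Prop} {x : L} (hx : x ∈ gSpGe q k)
    (mem : ∀ j, k ≤ j → ∀ y ∈ gSp q j, motive y) (zero : motive 0)
    (add : ∀ y z, motive y → motive z → motive (y + z)) : motive x := by
  refine Submodule.iSup_induction _ (motive := motive) hx (fun j y hy => ?_) zero add
  by_cases hj : k ≤ j
  · exact mem j hj y (by rwa [iSup_pos hj] at hy)
  · rw [iSup_neg hj, Submodule.mem_bot] at hy
    exact hy ▸ zero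

lemma lie_mem_gSpGe {q x y : L} {a b : ℤ} (hx : x ∈ gSpGe q a) (hy : y ∈ gSpGe q b) :
    ⁅x, y⁆ ∈ gSpGe q (a + b) := by
  refine gSpGe_induction hx (fun i hi x hx => ?_) (by simp)
    fun x x' h h' => by simpa only [add_lie] using add_mem h h'
  refine gSpGe_induction hy (fun j hj y hy => ?_) (by simp)
    fun y y' h h' => by simpa only [lie_add] using add_mem h h'
  exact gSp_le_gSpGe (by omega) (lie_mem_gSp hx hy)

lemma IsGoodAlgebra.gSp_le {B : LinearMap.BilinForm ℂ L} {q f : L} {m : Submodule ℂ L}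
    (hm : IsGoodAlgebra B q f m) {j : ℤ} (hj : 2 ≤ j) : gSp q j ≤ m := by
  obtain ⟨l, -, -, -, rfl⟩ := hm
  exact (gSp_le_gSpGe hj).trans le_sup_right

section Invariant

variable (B : LinearMap.BilinForm ℂ L) (hBinv : ∀ x y z : L, B ⁅x, y⁆ z = B x ⁅y, z⁆)
include hBinv

lemma bilinForm_eq_zero_of_mem_gSp {q x y : L} {a b : ℤ} (hab : a + b ≠ 0)
    (hx : x ∈ gSp q a) (hy : y ∈ gSp q b) : B x y = 0 := by
  have h := hBinv x q y
  rw [hy, ← lie_skew, hx] at h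
  simp only [map_neg, map_smul, LinearMap.neg_apply, LinearMap.smul_apply, smul_eq_mul] at h
  have hab' : (a : ℂ) + b ≠ 0 := by exact_mod_cast hab
  exact (mul_eq_zero.mp (by linear_combination -h : ((a : ℂ) + b) * B x y = 0)).resolve_left hab'

lemma bilinForm_eq_zero_of_mem_gSp_of_mem_gSpGe {q x y : L} {a k : ℤ} (hak : 0 < a + k)
    (hx : x ∈ gSp q a) (hy : y ∈ gSpGe q k) : B x y = 0 := by
  refine gSpGe_induction hy (fun j hj y hy => ?_) (by simp)
    fun y y' h h' => by rw [map_add, h, h', add_zero]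
  exact bilinForm_eq_zero_of_mem_gSp B hBinv (by omega) hx hy

/-- Only `𝔤_k(q)` pairs nontrivially with `𝔤_{-k}(q)`. -/
lemma eq_zero_of_mem_gSp_of_forall_mem_gSp_neg
    (hBnondeg : ∀ x : L, (∀ y : L, B x y = 0) → x = 0) {q x : L} {k : ℤ}
    (hdecomp : (⨆ j : ℤ, gSp q j) = ⊤) (hx : x ∈ gSp q (-k))
    (h : ∀ y ∈ gSp q k, B x y = 0) : x = 0 := by
  refine hBnondeg x fun y => ?_
  have hy : y ∈ ⨆ j : ℤ, gSp q j := hdecomp ▸ Submodule.mem_top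
  refine Submodule.iSup_induction _ (motive := fun y => B x y = 0) hy (fun j y hy => ?_)
    (by simp) fun y y' hy hy' => by rw [map_add, hy, hy', add_zero]
  by_cases hj : j = k
  · exact h y (hj ▸ hy)
  · exact bilinForm_eq_zero_of_mem_gSp B hBinv (by omega) hx hy

namespace IsGoodAlgebra

lemma bilinForm_lie_eq_zero {q f : L} {m : Submodule ℂ L} (hm : IsGoodAlgebra B q f m)
    (hf : f ∈ gSp q (-2)) {a b : L} (ha : a ∈ m) (hb : b ∈ m) : B f ⁅a, b⁆ = 0 := by
  obtain ⟨l, hl, hiso, -, rfl⟩ := hm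
  have hl₁ : l ≤ gSpGe q 1 := hl.trans (gSp_le_gSpGe le_rfl)
  have hm₁ : l ⊔ gSpGe q 2 ≤ gSpGe q 1 := sup_le hl₁ (gSpGe_anti (by norm_num))
  have hχ : ∀ w ∈ gSpGe q 3, B f w = 0 :=
    fun w hw => bilinForm_eq_zero_of_mem_gSp_of_mem_gSpGe B hBinv (by norm_num) hf hw
  obtain ⟨a₁, ha₁, a₂, ha₂, rfl⟩ := Submodule.mem_sup.mp ha
  obtain ⟨b₁, hb₁, b₂, hb₂, rfl⟩ := Submodule.mem_sup.mp hb
  -- all brackets except `⁅a₁, b₁⁆` with `a₁, b₁ ∈ l` land in degrees `≥ 3`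
  have h₁ : ⁅a₂, b₁⁆ ∈ gSpGe q 3 := lie_mem_gSpGe (a := 2) (b := 1) ha₂ (hl₁ hb₁)
  have h₂ : ⁅a₁ + a₂, b₂⁆ ∈ gSpGe q 3 := lie_mem_gSpGe (a := 1) (b := 2) (hm₁ ha) hb₂
  rw [lie_add, add_lie, map_add, map_add, hiso a₁ ha₁ b₁ hb₁, hχ _ h₁, hχ _ h₂, add_zero, add_zero]

end IsGoodAlgebra

end Invariant

theorem m₀_subset_ker_ad_f₁_general
    (B : LinearMap.BilinForm ℂ L)
    (hBnondeg : ∀ x : L, (∀ y : L, B x y = 0) → x = 0)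
    (hBinv : ∀ x y z : L, B ⁅x, y⁆ z = B x ⁅y, z⁆)
    (f₁ f₂ q₁ q₂ : L)
    (hgood₁ : IsGoodGrading q₁ f₁) (hgood₂ : IsGoodGrading q₂ f₂)
    (m₁ m₂ m₀ : Submodule ℂ L)
    (hma₁ : IsGoodAlgebra B q₁ f₁ m₁) (hma₂ : IsGoodAlgebra B q₂ f₂ m₂)
    (hsum : m₁ ⊔ m₀ = m₂)
    (hf₀ : f₂ - f₁ ∈ gSp q₁ 0) (hm₀0 : m₀ ≤ gSp q₁ 0)
     :
    ∀ z ∈ m₀, ⁅z, f₁⁆ = 0 := by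
  intro z hz
  have hz₂ : z ∈ m₂ := hsum ▸ Submodule.mem_sup_right hz
  have hg₂ : gSp q₁ 2 ≤ m₂ := hsum ▸ (hma₁.gSp_le le_rfl).trans le_sup_left
  have hzf : ⁅z, f₁⁆ ∈ gSp q₁ (-2) := by simpa using lie_mem_gSp (hm₀0 hz) hgood₁.f_mem
  refine eq_zero_of_mem_gSp_of_forall_mem_gSp_neg B hBinv hBnondeg hgood₁.decomp hzf
    fun y hy => ?_
  have hzy : ⁅z, y⁆ ∈ gSp q₁ 2 := by simpa using lie_mem_gSp (hm₀0 hz) hy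
  have h₂ : B f₂ ⁅z, y⁆ = 0 := hma₂.bilinForm_lie_eq_zero B hBinv hgood₂.f_mem hz₂ (hg₂ hy)
  have h₀ : B (f₂ - f₁) ⁅z, y⁆ = 0 := bilinForm_eq_zero_of_mem_gSp B hBinv (by norm_num) hf₀ hzy
  calc B ⁅z, f₁⁆ y = -B f₁ ⁅z, y⁆ := by rw [← lie_skew, map_neg, LinearMap.neg_apply, hBinv]
    _ = B (f₂ - f₁) ⁅z, y⁆ - B f₂ ⁅z, y⁆ := by rw [map_sub, LinearMap.sub_apply]; ring
    _ = 0 := by rw [h₀, h₂, sub_zero]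

/-- In the reduction-by-stages setting, `𝔪₀ ⊆ ker (ad f₁)`. -/
theorem m₀_subset_ker_ad_f₁
    [FiniteDimensional ℂ L] [LieAlgebra.IsSimple ℂ L]
    (B : LinearMap.BilinForm ℂ L)
    (hBsymm : ∀ x y : L, B x y = B y x)
    (hBnondeg : ∀ x : L, (∀ y : L, B x y = 0) → x = 0)
    (hBinv : ∀ x y z : L, B ⁅x, y⁆ z = B x ⁅y, z⁆)
    (f₁ f₂ q₁ q₂ : L)
    (hnil₁ : IsNilpotent (ad ℂ L f₁)) (hnil₂ : IsNilpotent (ad ℂ L f₂))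
    (hgood₁ : IsGoodGrading q₁ f₁) (hgood₂ : IsGoodGrading q₂ f₂)
    (m₁ m₂ m₀ : Submodule ℂ L)
    (hma₁ : IsGoodAlgebra B q₁ f₁ m₁) (hma₂ : IsGoodAlgebra B q₂ f₂ m₂)
    (hq₁q₂ : ⁅q₁, q₂⁆ = 0)
    (hsum : m₁ ⊔ m₀ = m₂) (hdisj : m₁ ⊓ m₀ = ⊥)
    (hm₀alg : ∀ x ∈ m₀, ∀ y ∈ m₀, ⁅x, y⁆ ∈ m₀)
    (hm₀q₁ : ∀ x ∈ m₀, ⁅q₁, x⁆ ∈ m₀) (hm₀q₂ : ∀ x ∈ m₀, ⁅q₂, x⁆ ∈ m₀)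
    (hideal : ∀ x ∈ m₂, ∀ y ∈ m₁, ⁅x, y⁆ ∈ m₁)
    (hf₀ : f₂ - f₁ ∈ gSp q₁ 0) (hm₀0 : m₀ ≤ gSp q₁ 0)
    (hq₀f₁ : ⁅q₂ - q₁, f₁⁆ = 0)
     :
    ∀ z ∈ m₀, ⁅z, f₁⁆ = 0 :=
  m₀_subset_ker_ad_f₁_general B hBnondeg hBinv f₁ f₂ q₁ q₂ hgood₁ hgood₂ m₁ m₂ m₀ hma₁ hma₂ hsum hf₀
    hm₀0
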